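/- Erasing edges between two blocks yields a mutation-linear identity map: if the index set of B is partitioned as I ∪ J and B' is obtained from B by setting b'_ij = b'_ji = 0 whenever i ∈ I and j ∈ J (keeping all other entries), then every B-coherent linear relation Σ c_i v_i over ℝ is also a B'-coherent linear relation. -/

import Mathlib

open scoped Classical

/-- A skew-symmetrizable integer matrix (an exchange matrix). -/
def SkewSymmetrizable {n : ℕ} (B : Matrix (Fin n) (Fin n) ℤ) : Prop :=
  ∃ d : Fin n → ℤ, (∀ i, 0 < d i) ∧ ∀ i j, d i * B i j = -(d j * B j i)

/-- Matrix mutation at index `k`. -/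
def mutate {n : ℕ} (B : Matrix (Fin n) (Fin n) ℤ) (k : Fin n) : Matrix (Fin n) (Fin n) ℤ :=
  Matrix.of fun i j =>
    if i = k ∨ j = k then -B i j
    else B i j + Int.sign (B k j) * max 0 (B i k * B k j)

/-- Iterated matrix mutation along a sequence. -/
def mutateSeq {n : ℕ} (B : Matrix (Fin n) (Fin n) ℤ) :
    List (Fin n) → Matrix (Fin n) (Fin n) ℤ
  | [] => B
  | k :: ks => mutate (mutateSeq B ks) k

/-- The mutation map `η_k^B : ℝ^n → ℝ^n`. -/
noncomputable def eta {n : ℕ} (B : Matrix (Fin n) (Fin n) ℤ) (k : Fin n)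
    (a : Fin n → ℝ) : Fin n → ℝ :=
  fun j =>
    if j = k then -a k
    else if 0 ≤ a k ∧ 0 ≤ B k j then a j + a k * (B k j : ℝ)
    else if a k ≤ 0 ∧ B k j ≤ 0 then a j - a k * (B k j : ℝ)
    else a j

/-- The composed mutation map for a sequence of indices. -/
noncomputable def etaSeq {n : ℕ} (B : Matrix (Fin n) (Fin n) ℤ) :
    List (Fin n) → (Fin n → ℝ) → (Fin n → ℝ)
  | [] => id
  | k :: ks => fun a => eta (mutateSeq B ks) k (etaSeq B ks a)

/-- A `B`-coherent linear relation `Σ_{i ∈ S} c_i v_i`. -/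
def IsBCoherent {n : ℕ} {σ : Type} (B : Matrix (Fin n) (Fin n) ℤ)
    (S : Finset σ) (c : σ → ℝ) (v : σ → Fin n → ℝ) : Prop :=
  ∀ ks : List (Fin n),
    (∑ i ∈ S, c i • etaSeq B ks (v i)) = (0 : Fin n → ℝ) ∧
    (∑ i ∈ S, c i • (fun j => min (etaSeq B ks (v i) j) 0 : Fin n → ℝ)) = (0 : Fin n → ℝ)

/-!
Coordinate `j` of `η_k^M` reads only the coordinates `j`, `k` of its argument and the entry
`M k j`, and entry `(i, j)` of `μ_k M` reads only the entries `(i, j)`, `(i, k)`, `(k, j)`.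
Since mutation preserves the absence of edges between `I` and `Iᶜ`, a mutation of `B'` at an
index outside the block of `j` leaves coordinate `j` alone, and a mutation inside that
block acts on it exactly as the corresponding mutation of `B`. Hence coordinate `j` of
`η_ks^{B'}` equals coordinate `j` of `η_{ks'}^B`, where `ks'` keeps the indices of `ks` lying
in the block of `j`, and both coherence identities for `B'` are read off coordinatewise from
those for `B`.
-/

section Blocks

variable {n : ℕ}

def Blocked (I : Finset (Fin n)) (M : Matrix (Fin n) (Fin n) ℤ) : Prop :=
  ∀ i j, ¬((i ∈ I) ↔ (j ∈ I)) → M i j = 0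

def blockFilter (I : Finset (Fin n)) (j : Fin n) (ks : List (Fin n)) : List (Fin n) :=
  ks.filter fun m => decide ((m ∈ I) ↔ (j ∈ I))

variable {I : Finset (Fin n)}

theorem blockFilter_congr {k j : Fin n} (h : (k ∈ I) ↔ (j ∈ I)) :
    blockFilter I k = blockFilter I j := by
  funext ks
  simp only [blockFilter, h]

theorem blockFilter_cons_of_iff {k j : Fin n} (h : (k ∈ I) ↔ (j ∈ I)) (ks : List (Fin n)) :
    blockFilter I j (k :: ks) = k :: blockFilter I j ks := by
  simp [blockFilter, h]

theorem blockFilter_cons_of_not_iff {k j : Fin n} (h : ¬((k ∈ I) ↔ (j ∈ I)))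
    (ks : List (Fin n)) : blockFilter I j (k :: ks) = blockFilter I j ks := by
  simp [blockFilter, h]

theorem mutate_apply_congr {M N : Matrix (Fin n) (Fin n) ℤ} {k i j : Fin n}
    (hij : M i j = N i j) (hik : M i k = N i k) (hkj : M k j = N k j) :
    mutate M k i j = mutate N k i j := by
  simp only [mutate, Matrix.of_apply, hij, hik, hkj]

theorem mutate_apply_of_ne_of_eq_zero {M : Matrix (Fin n) (Fin n) ℤ} {k i j : Fin n}
    (hjk : j ≠ k) (hkj : M k j = 0) : mutate M k i j = M i j := by
  by_cases hik : i = k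
  · subst hik
    simp [mutate, hkj]
  · simp [mutate, hik, hjk, hkj]

theorem eta_apply_congr {M N : Matrix (Fin n) (Fin n) ℤ} {k j : Fin n} {a b : Fin n → ℝ}
    (hj : a j = b j) (hk : a k = b k) (hkj : M k j = N k j) :
    eta M k a j = eta N k b j := by
  simp only [eta, hj, hk, hkj]

theorem eta_apply_of_ne_of_eq_zero {M : Matrix (Fin n) (Fin n) ℤ} {k j : Fin n}
    (a : Fin n → ℝ) (hjk : j ≠ k) (hkj : M k j = 0) : eta M k a j = a j := by
  simp [eta, hjk, hkj]

theorem Blocked.mutate {M : Matrix (Fin n) (Fin n) ℤ} (hM : Blocked I M) (k : Fin n) :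
    Blocked I (mutate M k) := by
  intro i j hij
  by_cases hjk : (k ∈ I) ↔ (j ∈ I)
  · have hik : ¬((i ∈ I) ↔ (k ∈ I)) := fun hik => hij (hik.trans hjk)
    simp [_root_.mutate, hM i j hij, hM i k hik]
  · have hjk' : j ≠ k := by rintro rfl; exact hjk Iff.rfl
    rw [mutate_apply_of_ne_of_eq_zero hjk' (hM k j hjk), hM i j hij]

theorem Blocked.mutateSeq {M : Matrix (Fin n) (Fin n) ℤ} (hM : Blocked I M) :
    ∀ ks : List (Fin n), Blocked I (mutateSeq M ks)
  | [] => hM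
  | k :: ks => (hM.mutateSeq ks).mutate k

variable {B B' : Matrix (Fin n) (Fin n) ℤ}

theorem mutateSeq_apply_of_blocked (hB' : Blocked I B')
    (hagree : ∀ i j, ((i ∈ I) ↔ (j ∈ I)) → B' i j = B i j) (ks : List (Fin n))
    {i j : Fin n} (hij : (i ∈ I) ↔ (j ∈ I)) :
    mutateSeq B' ks i j = mutateSeq B (blockFilter I j ks) i j := by
  induction ks generalizing i j with
  | nil => exact hagree i j hij
  | cons k ks ih =>
    by_cases hkj : (k ∈ I) ↔ (j ∈ I)
    · have hik : (i ∈ I) ↔ (k ∈ I) := hij.trans hkj.symm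
      rw [blockFilter_cons_of_iff hkj]
      refine mutate_apply_congr (ih hij) ?_ (ih hkj)
      rw [ih hik, blockFilter_congr hkj]
    · have hjk : j ≠ k := by rintro rfl; exact hkj Iff.rfl
      rw [blockFilter_cons_of_not_iff hkj, ← ih hij]
      exact mutate_apply_of_ne_of_eq_zero hjk ((hB'.mutateSeq ks) k j hkj)

theorem etaSeq_apply_of_blocked (hB' : Blocked I B')
    (hagree : ∀ i j, ((i ∈ I) ↔ (j ∈ I)) → B' i j = B i j) (ks : List (Fin n))
    (a : Fin n → ℝ) (j : Fin n) :
    etaSeq B' ks a j = etaSeq B (blockFilter I j ks) a j := by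
  induction ks generalizing j with
  | nil => rfl
  | cons k ks ih =>
    by_cases hkj : (k ∈ I) ↔ (j ∈ I)
    · rw [blockFilter_cons_of_iff hkj]
      refine eta_apply_congr (ih j) ?_ (mutateSeq_apply_of_blocked hB' hagree ks hkj)
      rw [ih k, blockFilter_congr hkj]
    · have hjk : j ≠ k := by rintro rfl; exact hkj Iff.rfl
      rw [blockFilter_cons_of_not_iff hkj, ← ih j]
      exact eta_apply_of_ne_of_eq_zero _ hjk ((hB'.mutateSeq ks) k j hkj)

end Blocks

theorem IsBCoherent.of_etaSeq_apply {n : ℕ} {σ : Type} {B B' : Matrix (Fin n) (Fin n) ℤ}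
    {S : Finset σ} {c : σ → ℝ} {v : σ → Fin n → ℝ} (h : IsBCoherent B S c v)
    (hη : ∀ ks j, ∃ ks', ∀ a, etaSeq B' ks a j = etaSeq B ks' a j) :
    IsBCoherent B' S c v := by
  intro ks
  constructor <;> funext j <;> obtain ⟨ks', hks'⟩ := hη ks j
  · simpa [Finset.sum_apply, hks'] using congrFun (h ks').1 j
  · simpa [Finset.sum_apply, hks'] using congrFun (h ks').2 j

theorem erase_edges_mutationLinear_general {n : ℕ} (B B' : Matrix (Fin n) (Fin n) ℤ)
    (I : Finset (Fin n))
    (hB' : ∀ i j, B' i j = if ((i ∈ I) ↔ (j ∈ I)) then B i j else 0)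
    {σ : Type} (S : Finset σ) (c : σ → ℝ) (v : σ → Fin n → ℝ)
    (h : IsBCoherent B S c v) :
    IsBCoherent B' S c v := by
  have hblocked : Blocked I B' := fun i j hij => by rw [hB', if_neg hij]
  have hagree : ∀ i j, ((i ∈ I) ↔ (j ∈ I)) → B' i j = B i j := fun i j hij => by
    rw [hB', if_pos hij]
  exact h.of_etaSeq_apply fun ks j =>
    ⟨blockFilter I j ks, fun a => etaSeq_apply_of_blocked hblocked hagree ks a j⟩

/-- Erasing all edges between the blocks `I` and `Iᶜ` of an exchange matrix
yields a mutation-linear identity map: every `B`-coherent linear relation is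
also `B'`-coherent. -/
theorem erase_edges_mutationLinear {n : ℕ} (B B' : Matrix (Fin n) (Fin n) ℤ)
    (hB : SkewSymmetrizable B) (I : Finset (Fin n))
    (hB' : ∀ i j, B' i j = if ((i ∈ I) ↔ (j ∈ I)) then B i j else 0)
    {σ : Type} (S : Finset σ) (c : σ → ℝ) (v : σ → Fin n → ℝ)
    (h : IsBCoherent B S c v) :
    IsBCoherent B' S c v :=
  erase_edges_mutationLinear_general B B' I hB' S c v h
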